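/- arXiv:1207.5555 — 2 statements merged into one kernel-verified Lean document; each statement's English description precedes it below -/
import Mathlib

section
/- Let q = 2^p and g : GF(q) → ℝ with g(δ) ≥ 0 for all δ and g(0) = 0. For each k ≥ 1 and δ ∈ GF(q), define m_k(δ) = min over all (δ₁, ..., δ_k) ∈ GF(q)^k with δ₁ ⊕ ... ⊕ δ_k = δ of ∑_{ℓ=1}^k g(δ_ℓ). Then m_k(δ) = m_p(δ) for all k ≥ p and all δ ∈ GF(q). -/
lemma zmod2_ne_zero (x : ZMod 2) (h : x ≠ 0) : x = 1 := by
  revert h; revert x; decide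

section aux
variable (p : ℕ) (g : GaloisField 2 p → ℝ)

lemma pad_lemma (hg0 : g 0 = 0) {k k' : ℕ} (hkk : k ≤ k') (ds : Fin k → GaloisField 2 p) :
    ∃ es : Fin k' → GaloisField 2 p, (∑ ℓ, es ℓ) = ∑ ℓ, ds ℓ ∧
      (∑ ℓ, g (es ℓ)) = ∑ ℓ, g (ds ℓ) := by
  classical
  set f : ℕ → GaloisField 2 p := fun i => if h : i < k then ds ⟨i, h⟩ else 0 with hf
  have hzero : ∀ i ∈ Finset.range k', i ∉ Finset.range k → f i = 0 := by
    intro i _ hi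
    simp only [Finset.mem_range, not_lt] at hi
    simp [hf, Nat.not_lt.mpr hi]
  refine ⟨fun i => f i, ?_, ?_⟩
  · calc ∑ ℓ : Fin k', f ↑ℓ = ∑ i ∈ Finset.range k', f i := Fin.sum_univ_eq_sum_range f k'
      _ = ∑ i ∈ Finset.range k, f i := (Finset.sum_subset (Finset.range_subset_range.mpr hkk) hzero).symm
      _ = ∑ ℓ : Fin k, f ↑ℓ := (Fin.sum_univ_eq_sum_range f k).symm
      _ = ∑ ℓ, ds ℓ := Finset.sum_congr rfl (fun i _ => by simp [hf, i.isLt])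
  · have hzero' : ∀ i ∈ Finset.range k', i ∉ Finset.range k → g (f i) = 0 := by
      intro i h1 h2; rw [hzero i h1 h2, hg0]
    calc ∑ ℓ : Fin k', g (f ↑ℓ) = ∑ i ∈ Finset.range k', g (f i) :=
          Fin.sum_univ_eq_sum_range (fun i => g (f i)) k'
      _ = ∑ i ∈ Finset.range k, g (f i) :=
          (Finset.sum_subset (Finset.range_subset_range.mpr hkk) hzero').symm
      _ = ∑ ℓ : Fin k, g (f ↑ℓ) := (Fin.sum_univ_eq_sum_range (fun i => g (f i)) k).symm
      _ = ∑ ℓ, g (ds ℓ) := Finset.sum_congr rfl (fun i _ => by simp [hf, i.isLt])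

lemma dep_lemma (hp : 0 < p) {k : ℕ} (hk : p < k) (ds : Fin k → GaloisField 2 p) :
    ∃ T : Finset (Fin k), T.Nonempty ∧ (∑ i ∈ T, ds i) = 0 := by
  classical
  have hfact : Fact (Nat.Prime 2) := ⟨Nat.prime_two⟩
  have hfr : Module.finrank (ZMod 2) (GaloisField 2 p) = p :=
    GaloisField.finrank 2 hp.ne'
  have hnli : ¬ LinearIndependent (ZMod 2) ds := by
    intro h
    have := h.fintype_card_le_finrank
    rw [Fintype.card_fin, hfr] at this
    omega
  rw [Fintype.not_linearIndependent_iff] at hnli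
  obtain ⟨c, hc0, i0, hi0⟩ := hnli
  refine ⟨Finset.univ.filter (fun i => c i ≠ 0), ⟨i0, by simp [hi0]⟩, ?_⟩
  rw [← hc0, Finset.sum_filter]
  apply Finset.sum_congr rfl
  intro i _
  by_cases h : c i = 0
  · simp [h]
  · rw [zmod2_ne_zero (c i) h]; simp

lemma key_lemma (hp : 0 < p) (hgnn : ∀ δ, 0 ≤ g δ) (hg0 : g 0 = 0) :
    ∀ k (ds : Fin k → GaloisField 2 p), ∃ es : Fin p → GaloisField 2 p,
      (∑ ℓ, es ℓ) = ∑ ℓ, ds ℓ ∧ (∑ ℓ, g (es ℓ)) ≤ ∑ ℓ, g (ds ℓ) := by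
  intro k
  induction k using Nat.strong_induction_on with
  | _ k ih =>
  intro ds
  rcases le_or_gt k p with hkp | hkp
  · obtain ⟨es, h1, h2⟩ := pad_lemma p g hg0 hkp ds
    exact ⟨es, h1, le_of_eq h2⟩
  · classical
    obtain ⟨T, hTne, hT0⟩ := dep_lemma p hp hkp ds
    obtain ⟨i0, hi0⟩ := hTne
    set ds' : Fin k → GaloisField 2 p := fun i => if i ∈ T then 0 else ds i with hds'
    have hsum' : ∑ ℓ, ds' ℓ = ∑ ℓ, ds ℓ := by
      rw [← Finset.sum_filter_add_sum_filter_not Finset.univ (· ∈ T) ds,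
          ← Finset.sum_filter_add_sum_filter_not Finset.univ (· ∈ T) ds']
      have h1 : ∑ i ∈ Finset.univ.filter (· ∈ T), ds i = 0 := by
        rw [show Finset.univ.filter (· ∈ T) = T by ext i; simp]; exact hT0
      have h2 : ∑ i ∈ Finset.univ.filter (· ∈ T), ds' i = 0 := by
        apply Finset.sum_eq_zero; intro i hi
        simp only [Finset.mem_filter] at hi; simp [hds', hi.2]
      have h3 : ∑ i ∈ Finset.univ.filter (¬ · ∈ T), ds' i
          = ∑ i ∈ Finset.univ.filter (¬ · ∈ T), ds i := by
        apply Finset.sum_congr rfl; intro i hi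
        simp only [Finset.mem_filter] at hi; simp [hds', hi.2]
      rw [h1, h2, h3]
    have hg' : ∑ ℓ, g (ds' ℓ) ≤ ∑ ℓ, g (ds ℓ) := by
      apply Finset.sum_le_sum; intro i _
      by_cases h : i ∈ T
      · simp [hds', h, hg0, hgnn]
      · simp [hds', h]
    -- remove the zero entry at i0
    obtain ⟨n, rfl⟩ : ∃ n, k = n + 1 := ⟨k - 1, by omega⟩
    set es' : Fin n → GaloisField 2 p := fun j => ds' (i0.succAbove j) with hes'
    have hsub : ∑ ℓ, es' ℓ = ∑ ℓ, ds' ℓ := by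
      rw [Fin.sum_univ_succAbove ds' i0]
      have : ds' i0 = 0 := by simp [hds', hi0]
      rw [this, zero_add]
    have hsubg : ∑ ℓ, g (es' ℓ) = ∑ ℓ, g (ds' ℓ) := by
      rw [Fin.sum_univ_succAbove (fun i => g (ds' i)) i0]
      have : ds' i0 = 0 := by simp [hds', hi0]
      rw [this, hg0, zero_add]
    obtain ⟨es, h1, h2⟩ := ih n (by omega) es'
    exact ⟨es, by rw [h1, hsub, hsum'], by calc _ ≤ _ := h2
      _ = ∑ ℓ, g (ds' ℓ) := hsubg
      _ ≤ _ := hg'⟩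
end aux

theorem stmt3 (p : ℕ) (hp : 0 < p) (g : GaloisField 2 p → ℝ)
    (hgnn : ∀ δ, 0 ≤ g δ) (hg0 : g 0 = 0)
    (m : ℕ → GaloisField 2 p → ℝ)
    (hm : ∀ k δ, 1 ≤ k → m k δ = sInf {s : ℝ | ∃ ds : Fin k → GaloisField 2 p,
        (∑ ℓ, ds ℓ) = δ ∧ s = ∑ ℓ, g (ds ℓ)}) :
    ∀ k δ, p ≤ k → m k δ = m p δ := by
  intro k δ hpk
  have hk1 : 1 ≤ k := le_trans hp hpk
  rw [hm k δ hk1, hm p δ hp]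
  set Sk := {s : ℝ | ∃ ds : Fin k → GaloisField 2 p,
      (∑ ℓ, ds ℓ) = δ ∧ s = ∑ ℓ, g (ds ℓ)} with hSk
  set Sp := {s : ℝ | ∃ ds : Fin p → GaloisField 2 p,
      (∑ ℓ, ds ℓ) = δ ∧ s = ∑ ℓ, g (ds ℓ)} with hSp
  have hbdk : BddBelow Sk := ⟨0, fun s hs => by
    obtain ⟨ds, _, rfl⟩ := hs; exact Finset.sum_nonneg fun i _ => hgnn _⟩
  have hbdp : BddBelow Sp := ⟨0, fun s hs => by
    obtain ⟨ds, _, rfl⟩ := hs; exact Finset.sum_nonneg fun i _ => hgnn _⟩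
  have hnep : Sp.Nonempty := by
    classical
    refine ⟨∑ ℓ : Fin p, g (if ℓ = ⟨0, hp⟩ then δ else 0),
      fun ℓ => if ℓ = ⟨0, hp⟩ then δ else 0, ?_, rfl⟩
    rw [Finset.sum_ite_eq' Finset.univ (⟨0, hp⟩ : Fin p) (fun _ => δ)]
    simp
  apply le_antisymm
  · -- sInf Sk ≤ sInf Sp : pad
    apply le_csInf hnep
    intro s hs
    obtain ⟨ds, hd, rfl⟩ := hs
    obtain ⟨es, h1, h2⟩ := pad_lemma p g hg0 hpk ds
    exact h2 ▸ csInf_le hbdk ⟨es, h1.trans hd, rfl⟩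
  · -- sInf Sp ≤ sInf Sk : compress
    have hnek : Sk.Nonempty := by
      obtain ⟨s, ds, hd, hs⟩ := hnep
      obtain ⟨es, h1, h2⟩ := pad_lemma p g hg0 hpk ds
      exact ⟨∑ ℓ, g (es ℓ), es, h1.trans hd, rfl⟩
    apply le_csInf hnek
    intro s hs
    obtain ⟨ds, hd, rfl⟩ := hs
    obtain ⟨es, h1, h2⟩ := key_lemma p g hp hgnn hg0 k ds
    exact le_trans (csInf_le hbdp ⟨es, h1.trans hd, rfl⟩) h2
end

section
/- Let q = 2^p, N finite with |N| ≥ 2, j ∈ N, a : N → GF(q), b_j = ⊕_{j' ∈ N\{j}} a_{j'}, and d ∈ GF(q) with d ≠ b_j. Then the set of order-1 configurations with x_j = d has exactly |N| − 1 elements, one for each j'' ∈ N \ {j}, namely x_{j''} = a_{j''} ⊕ (b_j ⊕ d) and x_{j'} = a_{j'} for j' ∈ N \ {j, j''}. -/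
theorem stmt9 (p : ℕ) (hp : 0 < p) {N : Type} [Fintype N] [DecidableEq N]
    (hN : 2 ≤ Fintype.card N) (j : N)
    (a : N → GaloisField 2 p)
    (b : GaloisField 2 p) (hb : b = ∑ j' ∈ Finset.univ.erase j, a j')
    (d : GaloisField 2 p) (hd : d ≠ b) :
    {x : N → GaloisField 2 p | x j = d ∧ (∑ j', x j') = 0 ∧
        ({j' : N | j' ≠ j ∧ x j' ≠ a j'}).ncard = 1}
      = {x : N → GaloisField 2 p | ∃ j'' : N, j'' ≠ j ∧
          x = fun j' => if j' = j then d
            else if j' = j'' then a j'' + (b + d) else a j'} ∧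
    {x : N → GaloisField 2 p | x j = d ∧ (∑ j', x j') = 0 ∧
        ({j' : N | j' ≠ j ∧ x j' ≠ a j'}).ncard = 1}.ncard
      = Fintype.card N - 1 := by
  have hbd : b + d ≠ 0 := by
    intro h
    apply hd
    have h2 : d = -b := by linear_combination h
    rw [h2, CharTwo.neg_eq]
  -- key sum computation for a configuration with deviation at j''
  have hsplit : ∀ j'' : N, j'' ≠ j → ∀ x : N → GaloisField 2 p,
      (∑ j', x j') = x j + (x j'' + ∑ j' ∈ (Finset.univ.erase j).erase j'', x j') := by
    intro j'' hne x
    rw [← Finset.add_sum_erase _ x (Finset.mem_univ j),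
      ← Finset.add_sum_erase _ x (Finset.mem_erase.mpr ⟨hne, Finset.mem_univ j''⟩)]
  have hbsplit : ∀ j'' : N, j'' ≠ j →
      b = a j'' + ∑ j' ∈ (Finset.univ.erase j).erase j'', a j' := by
    intro j'' hne
    rw [hb, ← Finset.add_sum_erase _ a (Finset.mem_erase.mpr ⟨hne, Finset.mem_univ j''⟩)]
  have hSeteq : {x : N → GaloisField 2 p | x j = d ∧ (∑ j', x j') = 0 ∧
        ({j' : N | j' ≠ j ∧ x j' ≠ a j'}).ncard = 1}
      = {x : N → GaloisField 2 p | ∃ j'' : N, j'' ≠ j ∧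
          x = fun j' => if j' = j then d
            else if j' = j'' then a j'' + (b + d) else a j'} := by
    ext x
    simp only [Set.mem_setOf_eq]
    constructor
    · rintro ⟨hxj, hsum, hcard⟩
      obtain ⟨j'', hj''⟩ := Set.ncard_eq_one.mp hcard
      have hmem : j'' ≠ j ∧ x j'' ≠ a j'' := by
        have : j'' ∈ ({j''} : Set N) := rfl
        rw [← hj''] at this; exact this
      have hother : ∀ j', j' ≠ j → j' ≠ j'' → x j' = a j' := by
        intro j' h1 h2
        by_contra h
        have : j' ∈ ({j''} : Set N) := by rw [← hj'']; exact ⟨h1, h⟩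
        exact h2 this
      refine ⟨j'', hmem.1, ?_⟩
      have hso : ∑ j' ∈ (Finset.univ.erase j).erase j'', x j'
          = ∑ j' ∈ (Finset.univ.erase j).erase j'', a j' := by
        apply Finset.sum_congr rfl
        intro j' hj'
        simp only [Finset.mem_erase] at hj'
        exact hother j' hj'.2.1 hj'.1
      have hsum2 := hsum
      rw [hsplit j'' hmem.1 x, hxj, hso] at hsum2
      have hxjj : x j'' = a j'' + (b + d) := by
        linear_combination hsum2 - hbsplit j'' hmem.1 - CharTwo.add_self_eq_zero (a j'')
          - CharTwo.add_self_eq_zero d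
          - CharTwo.add_self_eq_zero (∑ j' ∈ (Finset.univ.erase j).erase j'', a j')
      funext j'
      by_cases h1 : j' = j
      · subst h1; simp [hxj]
      · by_cases h2 : j' = j''
        · subst h2; simp [h1, hxjj]
        · simp [h1, h2, hother j' h1 h2]
    · rintro ⟨j'', hne, rfl⟩
      refine ⟨by simp, ?_, ?_⟩
      · rw [hsplit j'' hne]
        have hso : ∑ j' ∈ (Finset.univ.erase j).erase j'',
            (if j' = j then d else if j' = j'' then a j'' + (b + d) else a j')
            = ∑ j' ∈ (Finset.univ.erase j).erase j'', a j' := by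
          apply Finset.sum_congr rfl
          intro j' hj'
          simp only [Finset.mem_erase] at hj'
          simp [hj'.1, hj'.2.1]
        rw [hso]
        simp only [if_pos rfl, if_neg hne, if_true]
        linear_combination -hbsplit j'' hne + CharTwo.add_self_eq_zero b
          + CharTwo.add_self_eq_zero d
      · rw [Set.ncard_eq_one]
        refine ⟨j'', ?_⟩
        ext j'
        simp only [Set.mem_setOf_eq, Set.mem_singleton_iff]
        constructor
        · rintro ⟨h1, h2⟩
          by_contra h3
          simp [h1, h3] at h2
        · rintro rfl
          refine ⟨hne, ?_⟩
          simp only [if_neg hne, if_pos rfl, if_true]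
          intro h
          exact hbd (by linear_combination h)
  refine ⟨hSeteq, ?_⟩
  rw [hSeteq]
  have himg : {x : N → GaloisField 2 p | ∃ j'' : N, j'' ≠ j ∧
          x = fun j' => if j' = j then d
            else if j' = j'' then a j'' + (b + d) else a j'}
      = (fun j'' : N => fun j' => if j' = j then d
            else if j' = j'' then a j'' + (b + d) else a j') '' {j'' : N | j'' ≠ j} := by
    ext x
    simp only [Set.mem_setOf_eq, Set.mem_image]
    constructor
    · rintro ⟨j'', h1, h2⟩; exact ⟨j'', h1, h2.symm⟩
    · rintro ⟨j'', h1, h2⟩; exact ⟨j'', h1, h2.symm⟩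
  rw [himg, Set.ncard_image_of_injOn, show {j'' : N | j'' ≠ j} = ↑(Finset.univ.erase j) by
      ext y; simp, Set.ncard_coe_finset, Finset.card_erase_of_mem (Finset.mem_univ j),
      Finset.card_univ]
  intro j1 h1 j2 h2 heq
  by_contra hne12
  have := congrFun heq j1
  simp only [if_neg h1, if_pos rfl, if_true, if_neg hne12] at this
  exact hbd (by linear_combination this)
end
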